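/- arXiv:1309.0152 — 6 statements merged into one kernel-verified Lean document; each statement's English description precedes it below -/
import Mathlib

section
/- The Fibonacci matrix F̂ defined by F̂_{n,n} = f_n/f_{n+1}, F̂_{n,n-1} = -f_{n+1}/f_n, and F̂_{n,k} = 0 otherwise, has a two-sided inverse given by the lower triangular matrix G with G_{n,k} = f_{n+1}^2/(f_k f_{k+1}) for 0 ≤ k ≤ n and G_{n,k} = 0 for k > n; i.e., for all n, m, Σ_k F̂_{n,k} G_{k,m} = δ_{n,m} and Σ_k G_{n,k} F̂_{k,m} = δ_{n,m}. -/
/-! Since `F̂` is bidiagonal, every entry of `F̂ G` and `G F̂` is a sum of at most two terms. Off the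
diagonal they cancel because `G n k = f (n+1)² / (f k f (k+1))` splits as a function of `n` times a
function of `k`: for instance `f (n+1) / f (n+2) * G (n+1) m = f (n+1) f (n+2) / (f m f (m+1))
= f (n+2) / f (n+1) * G n m`. On the diagonal a single term survives and equals `1`. The Fibonacci
recurrence plays no role, only `f k ≠ 0`. -/

open scoped BigOperators ENNReal
open Filter Topology

noncomputable def fibr (n : ℕ) : ℝ := (Nat.fib (n + 1) : ℝ)

lemma fibr_pos (n : ℕ) : 0 < fibr n := by
  simpa [fibr] using Nat.cast_pos.mpr (Nat.fib_pos.mpr (Nat.succ_pos n))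

noncomputable def Fhat (x : ℕ → ℝ) : ℕ → ℝ
  | 0 => x 0
  | (n + 1) => fibr (n + 1) / fibr (n + 2) * x (n + 1) - fibr (n + 2) / fibr (n + 1) * x n

lemma Fhat_add (x y : ℕ → ℝ) : Fhat (x + y) = Fhat x + Fhat y := by
  funext n; cases n <;> simp [Fhat] <;> ring

lemma Fhat_smul (c : ℝ) (x : ℕ → ℝ) : Fhat (c • x) = c • Fhat x := by
  funext n; cases n <;> simp [Fhat] <;> ring

noncomputable def FhatL : (ℕ → ℝ) →ₗ[ℝ] (ℕ → ℝ) where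
  toFun := Fhat
  map_add' := Fhat_add
  map_smul' := Fhat_smul

lemma Fhat_inj : Function.Injective Fhat := by
  have h0 : ∀ x : ℕ → ℝ, Fhat x = 0 → x = 0 := by
    intro x hx
    funext n
    induction n with
    | zero => simpa [Fhat] using congrFun hx 0
    | succ n ih =>
        have h := congrFun hx (n + 1)
        simp only [Fhat, ih, Pi.zero_apply, mul_zero, sub_zero] at h
        have h1 : fibr (n + 1) / fibr (n + 2) ≠ 0 :=
          div_ne_zero (fibr_pos _).ne' (fibr_pos _).ne'
        simpa [Pi.zero_apply] using (mul_eq_zero.mp h).resolve_left h1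
  have : Function.Injective FhatL := (injective_iff_map_eq_zero' FhatL).mpr
    (fun x => ⟨fun h => h0 x h, fun h => by simp [FhatL, h]; funext n; cases n <;> simp [Fhat]⟩)
  exact this

noncomputable def FhatLP : PreLp (fun _ : ℕ => ℝ) →ₗ[ℝ] PreLp (fun _ : ℕ => ℝ) where
  toFun x := Fhat x
  map_add' x y := Fhat_add x y
  map_smul' c x := Fhat_smul c x

noncomputable def ellF (p : ℝ≥0∞) : Submodule ℝ (PreLp (fun _ : ℕ => ℝ)) :=
  (lpSubmodule ℝ (fun _ : ℕ => ℝ) p).comap FhatLP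

instance (p : ℝ≥0∞) : CoeOut (ellF p) (ℕ → ℝ) := ⟨fun x => (x : PreLp (fun _ : ℕ => ℝ))⟩

noncomputable def ellFtoLp (p : ℝ≥0∞) : ellF p →ₗ[ℝ] lp (fun _ : ℕ => ℝ) p where
  toFun x := ⟨Fhat (x : ℕ → ℝ), x.2⟩
  map_add' x y := Subtype.ext (Fhat_add (x : ℕ → ℝ) (y : ℕ → ℝ))
  map_smul' c x := Subtype.ext (Fhat_smul c (x : ℕ → ℝ))

lemma ellFtoLp_inj (p : ℝ≥0∞) : Function.Injective (ellFtoLp p) := by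
  intro x y h
  have h2 : Fhat (x : ℕ → ℝ) = Fhat (y : ℕ → ℝ) := congrArg Subtype.val h
  exact Subtype.ext (Fhat_inj h2)

noncomputable instance (p : ℝ≥0∞) [Fact (1 ≤ p)] : NormedAddCommGroup (ellF p) :=
  NormedAddCommGroup.induced _ _ (ellFtoLp p) (ellFtoLp_inj p)

noncomputable instance (p : ℝ≥0∞) [Fact (1 ≤ p)] : NormedSpace ℝ (ellF p) :=
  NormedSpace.induced _ _ _ (ellFtoLp p)

noncomputable def abar (a : ℕ → ℝ) (k : ℕ) : ℝ :=
  ∑' j : ℕ, (fibr (k + j + 1)) ^ 2 / (fibr k * fibr (k + 1)) * a (k + j)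

noncomputable def hmnc {X : Type*} [MetricSpace X] (Q : Set X) : ℝ :=
  sInf {ε : ℝ | 0 < ε ∧ ∃ s : Finset X, Q ⊆ ⋃ x ∈ s, Metric.ball x ε}



noncomputable def FhatM (n k : ℕ) : ℝ :=
  if k = n then fibr n / fibr (n + 1)
  else if k + 1 = n then -(fibr (n + 1) / fibr n) else 0

noncomputable def GM (n k : ℕ) : ℝ :=
  if k ≤ n then fibr (n + 1) ^ 2 / (fibr k * fibr (k + 1)) else 0

section

variable {K : Type*} [Field K] (f : ℕ → K)

def bidiag (n k : ℕ) : K :=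
  if k = n then f n / f (n + 1) else if k + 1 = n then -(f (n + 1) / f n) else 0

def bidiagInv (n k : ℕ) : K :=
  if k ≤ n then f (n + 1) ^ 2 / (f k * f (k + 1)) else 0

theorem bidiag_self (n : ℕ) : bidiag f n n = f n / f (n + 1) := if_pos rfl

theorem bidiag_succ_self (n : ℕ) : bidiag f (n + 1) n = -(f (n + 2) / f (n + 1)) := by
  simp [bidiag]

theorem bidiag_eq_zero {n k : ℕ} (h₁ : k ≠ n) (h₂ : k + 1 ≠ n) : bidiag f n k = 0 := by
  simp [bidiag, h₁, h₂]

theorem bidiagInv_of_le {n k : ℕ} (h : k ≤ n) :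
    bidiagInv f n k = f (n + 1) ^ 2 / (f k * f (k + 1)) :=
  if_pos h

theorem bidiagInv_eq_zero {n k : ℕ} (h : n < k) : bidiagInv f n k = 0 :=
  if_neg h.not_ge

theorem tsum_eq_add_of_eq_zero {β M : Type*} [DecidableEq β] [AddCommMonoid M]
    [TopologicalSpace M] {g : β → M} {i j : β} (hij : i ≠ j)
    (hg : ∀ k, k ≠ i → k ≠ j → g k = 0) : ∑' k, g k = g i + g j := by
  rw [tsum_eq_sum (s := {i, j}) (fun k hk => by simp_all), Finset.sum_pair hij]

variable [TopologicalSpace K]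

theorem tsum_bidiag_zero_mul (x : ℕ → K) : ∑' k, bidiag f 0 k * x k = f 0 / f 1 * x 0 := by
  rw [tsum_eq_single 0 fun k hk => by rw [bidiag_eq_zero f hk (by omega), zero_mul],
    bidiag_self, zero_add]

theorem tsum_bidiag_succ_mul (n : ℕ) (x : ℕ → K) :
    ∑' k, bidiag f (n + 1) k * x k =
      f (n + 1) / f (n + 2) * x (n + 1) - f (n + 2) / f (n + 1) * x n := by
  rw [tsum_eq_add_of_eq_zero (i := n + 1) (j := n) (by omega)
    fun k h₁ h₂ => by rw [bidiag_eq_zero f h₁ (by omega), zero_mul],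
    bidiag_self, bidiag_succ_self, neg_mul, ← sub_eq_add_neg]

theorem tsum_mul_bidiag (m : ℕ) (x : ℕ → K) :
    ∑' k, x k * bidiag f k m =
      x m * (f m / f (m + 1)) - x (m + 1) * (f (m + 2) / f (m + 1)) := by
  rw [tsum_eq_add_of_eq_zero (i := m) (j := m + 1) (by omega)
    fun k h₁ h₂ => by rw [bidiag_eq_zero f (Ne.symm h₁) (by omega), mul_zero],
    bidiag_self, bidiag_succ_self, mul_neg, ← sub_eq_add_neg]

variable {f}

theorem tsum_bidiag_mul_bidiagInv (hf : ∀ k, f k ≠ 0) (n m : ℕ) :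
    ∑' k, bidiag f n k * bidiagInv f k m = if n = m then 1 else 0 := by
  cases n with
  | zero =>
    rw [tsum_bidiag_zero_mul]
    rcases Nat.eq_zero_or_pos m with rfl | hm
    · rw [bidiagInv_of_le f le_rfl, if_pos rfl]
      field_simp [hf]
    · rw [bidiagInv_eq_zero f hm, mul_zero, if_neg hm.ne]
  | succ n =>
    rw [tsum_bidiag_succ_mul]
    rcases lt_trichotomy m (n + 1) with hm | rfl | hm
    · rw [bidiagInv_of_le f hm.le, bidiagInv_of_le f (Nat.le_of_lt_succ hm), if_neg hm.ne']
      field_simp [hf]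
      ring
    · rw [bidiagInv_of_le f le_rfl, bidiagInv_eq_zero f n.lt_succ_self, mul_zero, sub_zero,
        if_pos rfl]
      field_simp [hf]
    · rw [bidiagInv_eq_zero f hm, bidiagInv_eq_zero f (n.lt_succ_self.trans hm), if_neg hm.ne]
      ring

theorem tsum_bidiagInv_mul_bidiag (hf : ∀ k, f k ≠ 0) (n m : ℕ) :
    ∑' k, bidiagInv f n k * bidiag f k m = if n = m then 1 else 0 := by
  rw [tsum_mul_bidiag]
  rcases lt_trichotomy m n with hm | rfl | hm
  · rw [bidiagInv_of_le f hm.le, bidiagInv_of_le f hm, if_neg hm.ne']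
    field_simp [hf]
    ring
  · rw [bidiagInv_of_le f le_rfl, bidiagInv_eq_zero f m.lt_succ_self, zero_mul, sub_zero,
      if_pos rfl]
    field_simp [hf]
  · rw [bidiagInv_eq_zero f hm, bidiagInv_eq_zero f (hm.trans m.lt_succ_self), if_neg hm.ne]
    ring

end

theorem FhatM_eq_bidiag : FhatM = bidiag fibr := rfl

theorem GM_eq_bidiagInv : GM = bidiagInv fibr := rfl

theorem stmt0 (n m : ℕ) :
    (∑' k : ℕ, FhatM n k * GM k m) = (if n = m then (1 : ℝ) else 0) ∧
    (∑' k : ℕ, GM n k * FhatM k m) = (if n = m then (1 : ℝ) else 0) := by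
  have hf : ∀ k, fibr k ≠ 0 := fun k => (fibr_pos k).ne'
  rw [FhatM_eq_bidiag, GM_eq_bidiagInv]
  exact ⟨tsum_bidiag_mul_bidiagInv hf n m, tsum_bidiagInv_mul_bidiag hf n m⟩
end

section
/- If y : ℕ → ℝ is defined from x : ℕ → ℝ by y_0 = x_0 and y_n = (f_n/f_{n+1}) x_n − (f_{n+1}/f_n) x_{n-1} for n ≥ 1, then for every n, x_n = Σ_{k=0}^{n} (f_{n+1}^2/(f_k f_{k+1})) y_k. -/
open scoped BigOperators ENNReal
open Filter Topology

lemma div_mul_sub_div_mul_div {K : Type*} [Field K] {a b : K} (ha : a ≠ 0) (hb : b ≠ 0)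
    (s t : K) : (a / b * s - b / a * t) / (a * b) = s / b ^ 2 - t / a ^ 2 := by
  field_simp

/- Dividing by `f_n f_{n+1}` turns the defining relation into `y_n / (f_n f_{n+1}) = u_n - u_{n-1}`
with `u_n = x_n / f_{n+1}^2`, so the sum telescopes to `u_n`. -/
theorem stmt1 (x y : ℕ → ℝ) (h0 : y 0 = x 0)
    (h : ∀ n : ℕ, 1 ≤ n → y n = fibr n / fibr (n + 1) * x n - fibr (n + 1) / fibr n * x (n - 1)) :
    ∀ n : ℕ, x n = ∑ k ∈ Finset.range (n + 1), fibr (n + 1) ^ 2 / (fibr k * fibr (k + 1)) * y k := by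
  set u : ℕ → ℝ := fun n => x n / fibr (n + 1) ^ 2
  have hdiff : ∀ k, y k / (fibr k * fibr (k + 1)) = if k = 0 then u 0 else u k - u (k - 1) := by
    rintro (_ | k)
    · simp [u, h0, fibr]
    · rw [h (k + 1) k.succ_pos]
      exact div_mul_sub_div_mul_div (fibr_pos _).ne' (fibr_pos _).ne' _ _
  intro n
  have hfn : fibr (n + 1) ≠ 0 := (fibr_pos _).ne'
  calc x n = fibr (n + 1) ^ 2 * u n := by simp only [u]; field_simp
    _ = fibr (n + 1) ^ 2 * ∑ k ∈ Finset.range (n + 1), y k / (fibr k * fibr (k + 1)) := by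
      simp_rw [hdiff, ← Finset.eq_sum_range_sub' u n]
    _ = _ := by
      rw [Finset.mul_sum]
      exact Finset.sum_congr rfl fun k _ => by ring
end

section
/- The map x ↦ F̂x, where (F̂x)_0 = x_0 and (F̂x)_n = (f_n/f_{n+1}) x_n − (f_{n+1}/f_n) x_{n-1} for n ≥ 1, is a linear bijection from the space ℓ_p(F̂) = { x : ℕ → ℝ | F̂x ∈ ℓ_p } onto ℓ_p, and ‖x‖_{ℓ_p(F̂)} := ‖F̂x‖_{ℓ_p} defines a norm on ℓ_p(F̂) making it a Banach space, for 1 ≤ p < ∞. -/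
/-! `Fhat` is lower bidiagonal with nonzero diagonal entries `fibr n / fibr (n + 1)`, so `Fhat x = y`
is solved uniquely by forward substitution. Hence `Fhat` restricts to a linear bijection from `ellF p`
onto `ℓ_p`, which is an isometry for the norm induced from `ℓ_p` and so carries completeness back. -/

open scoped BigOperators ENNReal
open Filter Topology

noncomputable def FhatInv (y : ℕ → ℝ) : ℕ → ℝ
  | 0 => y 0
  | (n + 1) => fibr (n + 2) / fibr (n + 1) *
      (y (n + 1) + fibr (n + 2) / fibr (n + 1) * FhatInv y n)

lemma Fhat_FhatInv (y : ℕ → ℝ) : Fhat (FhatInv y) = y := by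
  funext n
  cases n with
  | zero => simp [Fhat, FhatInv]
  | succ n =>
      have h1 : fibr (n + 1) ≠ 0 := (fibr_pos _).ne'
      have h2 : fibr (n + 2) ≠ 0 := (fibr_pos _).ne'
      simp only [Fhat, FhatInv]
      field_simp
      ring

lemma ellFtoLp_surj (p : ℝ≥0∞) : Function.Surjective (ellFtoLp p) := by
  intro y
  have hy : Fhat (FhatInv y) ∈ lpSubmodule ℝ (fun _ : ℕ => ℝ) p := by
    rw [Fhat_FhatInv]; exact y.2
  exact ⟨⟨FhatInv y, hy⟩, Subtype.ext (Fhat_FhatInv y)⟩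

noncomputable def ellFLinearIsometryEquivLp (p : ℝ≥0∞) [Fact (1 ≤ p)] :
    ellF p ≃ₗᵢ[ℝ] lp (fun _ : ℕ => ℝ) p :=
  { LinearEquiv.ofBijective (ellFtoLp p) ⟨ellFtoLp_inj p, ellFtoLp_surj p⟩ with
    norm_map' := fun _ => rfl }

theorem stmt3_general (p : ℝ≥0∞) [Fact (1 ≤ p)] :
    ∃ e : ellF p ≃ₗ[ℝ] lp (fun _ : ℕ => ℝ) p,
      (∀ x : ellF p, ((e x : ∀ _ : ℕ, ℝ)) = Fhat (x : ℕ → ℝ)) ∧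
      (∀ x : ellF p, ‖x‖ = ‖e x‖) ∧
      CompleteSpace (ellF p) := by
  let e := ellFLinearIsometryEquivLp p
  exact ⟨e.toLinearEquiv, fun _ => rfl, fun _ => rfl,
    e.toIsometryEquiv.completeSpace_iff.mpr inferInstance⟩

theorem stmt3 (p : ℝ≥0∞) [Fact (1 ≤ p)] (hp : p ≠ ∞) :
    ∃ e : ellF p ≃ₗ[ℝ] lp (fun _ : ℕ => ℝ) p,
      (∀ x : ellF p, ((e x : ∀ _ : ℕ, ℝ)) = Fhat (x : ℕ → ℝ)) ∧
      (∀ x : ellF p, ‖x‖ = ‖e x‖) ∧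
      CompleteSpace (ellF p) :=
  stmt3_general p
end

section
/- Let 1 < p < ∞ and q = p/(p−1). Suppose a : ℕ → ℝ is such that the sequence ā defined by ā_k = Σ_{j=k}^{∞} (f_{j+1}^2/(f_k f_{k+1})) a_j converges absolutely for each k and ā ∈ ℓ_q. Then for every x ∈ ℓ_p(F̂), the series Σ_k a_k x_k converges and Σ_k a_k x_k = Σ_k ā_k y_k, where y = F̂x ∈ ℓ_p. -/
open scoped BigOperators ENNReal
open Filter Topology

/-!
Write `g k = f_k f_{k+1}`, `b n = f_{n+1}^2 a_n`, `y = F̂x` and let `T k = Σ_{j ≥ k} b j`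
be the tails of `b`, so that `ā_k = T k / g k` and `x_n = f_{n+1}^2 Σ_{k ≤ n} y_k / g_k`.
Abel summation gives
`Σ_{n<N} a_n x_n = Σ_{k<N} ā_k y_k - T N · Σ_{k<N} y_k / g_k`.
By Hölder, `ā y` is summable, and so is `y / g` because `g k ≥ 2^k`; since `T N → 0`,
the partial sums converge to `Σ ā_k y_k`.
-/

lemma summable_mul_of_summable_abs_rpow {ι : Type*} {p q : ℝ} (hpq : p.HolderConjugate q)
    {u v : ι → ℝ} (hu : Summable fun i => |u i| ^ p) (hv : Summable fun i => |v i| ^ q) :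
    Summable fun i => u i * v i :=
  Summable.of_abs <| by
    simpa only [abs_mul] using
      Real.summable_mul_of_Lp_Lq_of_nonneg hpq (fun i => abs_nonneg (u i))
        (fun i => abs_nonneg (v i)) hu hv

section AbelSummation

variable {R : Type*} [CommRing R]

lemma sum_range_mul_sum_range_succ_eq {b c T : ℕ → R} (hT : ∀ n, T n = b n + T (n + 1))
    (N : ℕ) :
    ∑ n ∈ Finset.range N, b n * ∑ k ∈ Finset.range (n + 1), c k =
      ∑ k ∈ Finset.range N, c k * T k - T N * ∑ k ∈ Finset.range N, c k := by
  induction N with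
  | zero => simp
  | succ N ih =>
    rw [Finset.sum_range_succ, ih, Finset.sum_range_succ, Finset.sum_range_succ, hT N]
    ring

variable [TopologicalSpace R] [IsTopologicalRing R] [T2Space R]

theorem tendsto_sum_range_mul_sum_range_succ {b c : ℕ → R} (hb : Summable b)
    (hc : Summable c) (hcT : Summable fun k => c k * ∑' j, b (j + k)) :
    Tendsto (fun N => ∑ n ∈ Finset.range N, b n * ∑ k ∈ Finset.range (n + 1), c k) atTop
      (𝓝 (∑' k, c k * ∑' j, b (j + k))) := by
  have htail : ∀ n, ∑' j, b (j + n) = b n + ∑' j, b (j + (n + 1)) := fun n => by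
    rw [((summable_nat_add_iff n).2 hb).tsum_eq_zero_add]
    simp only [zero_add, add_right_comm _ 1 n, add_assoc]
  simp only [sum_range_mul_sum_range_succ_eq htail]
  simpa using hcT.hasSum.tendsto_sum_nat.sub
    ((tendsto_sum_nat_add b).mul hc.hasSum.tendsto_sum_nat)

end AbelSummation

lemma fibr_add_two (n : ℕ) : fibr (n + 2) = fibr (n + 1) + fibr n := by
  simp only [fibr, Nat.fib_add_two, Nat.cast_add]
  ring

lemma two_pow_le_fibr_mul_fibr_succ (k : ℕ) : (2 : ℝ) ^ k ≤ fibr k * fibr (k + 1) := by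
  induction k with
  | zero => simp [fibr]
  | succ k ih =>
    have hmono : fibr k ≤ fibr (k + 1) := by
      simpa [fibr] using Nat.fib_le_fib_succ (n := k + 1)
    rw [fibr_add_two, pow_succ]
    nlinarith [fibr_pos k, fibr_pos (k + 1)]

lemma summable_abs_inv_fibr_mul_fibr_succ_rpow {q : ℝ} (hq : 1 ≤ q) :
    Summable fun k => |(fibr k * fibr (k + 1))⁻¹| ^ q := by
  refine summable_geometric_two.of_nonneg_of_le (fun k => by positivity) fun k => ?_
  have hg : (2 : ℝ) ^ k ≤ fibr k * fibr (k + 1) := two_pow_le_fibr_mul_fibr_succ k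
  have hpos : 0 < fibr k * fibr (k + 1) := mul_pos (fibr_pos k) (fibr_pos (k + 1))
  rw [abs_of_pos (inv_pos.2 hpos), one_div, inv_pow]
  calc (fibr k * fibr (k + 1))⁻¹ ^ q ≤ (fibr k * fibr (k + 1))⁻¹ :=
        Real.rpow_le_self_of_le_one (by positivity)
          (inv_le_one_of_one_le₀ (le_trans (one_le_pow₀ one_le_two) hg)) hq
    _ ≤ ((2 : ℝ) ^ k)⁻¹ := inv_anti₀ (by positivity) hg

lemma eq_fibr_sq_mul_sum_Fhat_div (x : ℕ → ℝ) (n : ℕ) :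
    x n = fibr (n + 1) ^ 2 *
      ∑ k ∈ Finset.range (n + 1), Fhat x k / (fibr k * fibr (k + 1)) := by
  induction n with
  | zero => simp [Fhat, fibr]
  | succ n ih =>
    have h1 := (fibr_pos (n + 1)).ne'
    have h2 := (fibr_pos (n + 2)).ne'
    have hsum : ∑ k ∈ Finset.range (n + 1), Fhat x k / (fibr k * fibr (k + 1)) =
        x n / fibr (n + 1) ^ 2 := by
      rw [ih]; field_simp
    rw [Finset.sum_range_succ, hsum]
    simp only [Fhat]
    field_simp
    ring

lemma abar_eq_tsum_div (a : ℕ → ℝ) (k : ℕ) :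
    abar a k = (∑' j, fibr (j + k + 1) ^ 2 * a (j + k)) / (fibr k * fibr (k + 1)) := by
  rw [abar, ← tsum_div_const]
  refine tsum_congr fun j => ?_
  rw [add_comm k j]
  ring

theorem stmt5 (p q : ℝ) (hp : 1 < p) (hq : q = p / (p - 1)) (a : ℕ → ℝ)
    (ha : ∀ k : ℕ, Summable fun j : ℕ => |fibr (k + j + 1) ^ 2 / (fibr k * fibr (k + 1)) * a (k + j)|)
    (habar : Summable fun k : ℕ => |abar a k| ^ q)
    (x : ℕ → ℝ) (hx : Summable fun n : ℕ => |Fhat x n| ^ p) :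
    Summable (fun k : ℕ => abar a k * Fhat x k) ∧
    Tendsto (fun N : ℕ => ∑ k ∈ Finset.range N, a k * x k) atTop
      (𝓝 (∑' k : ℕ, abar a k * Fhat x k)) := by
  have hpq : p.HolderConjugate q := (Real.holderConjugate_iff_eq_conjExponent hp).2 hq
  have hb : Summable fun n => fibr (n + 1) ^ 2 * a n := by
    simpa [fibr] using (ha 0).of_abs
  have hsum : Summable fun k => abar a k * Fhat x k :=
    summable_mul_of_summable_abs_rpow hpq.symm habar hx
  have hc : Summable fun k => Fhat x k / (fibr k * fibr (k + 1)) := by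
    simpa only [div_eq_mul_inv] using summable_mul_of_summable_abs_rpow hpq hx
      (summable_abs_inv_fibr_mul_fibr_succ_rpow hpq.symm.lt.le)
  have habar_eq : ∀ k, abar a k * Fhat x k = Fhat x k / (fibr k * fibr (k + 1)) *
      ∑' j, fibr (j + k + 1) ^ 2 * a (j + k) := fun k => by
    rw [abar_eq_tsum_div]; ring
  refine ⟨hsum, ?_⟩
  simp only [habar_eq] at hsum ⊢
  refine (tendsto_sum_range_mul_sum_range_succ hb hc hsum).congr fun N =>
    Finset.sum_congr rfl fun n _ => ?_
  rw [eq_fibr_sq_mul_sum_Fhat_div x n]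
  ring
end

section
/- Let a : ℕ → ℝ with ā_k = Σ_{j=k}^∞ (f_{j+1}^2/(f_k f_{k+1})) a_j absolutely convergent for each k and ā bounded. Then the norm of the linear functional x ↦ Σ_k a_k x_k on ℓ_1(F̂) equals sup_k |ā_k|. -/
open scoped BigOperators ENNReal
open Filter Topology

instance factOne : Fact ((1 : ℝ≥0∞) ≤ 1) := ⟨le_rfl⟩

/-!
Through the identity `∑ a_k x_k = ∑ ā_k (F̂x)_k` the functional becomes the pairing of `ā ∈ ℓ_∞`
with `F̂x ∈ ℓ_1`, so it is bounded by `sup_k |ā_k| · ‖x‖`. Conversely, the `F̂`-preimage of the unit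
vector `e_k` has norm one and is sent to `ā_k`.
-/

-- The kernel `f_{n+1}^2 / (f_k f_{k+1})` in the definition of `abar` is this preimage of `e_k`.
noncomputable def FhatInvSingle (k : ℕ) : ℕ → ℝ :=
  fun n => if k ≤ n then fibr (n + 1) ^ 2 / (fibr k * fibr (k + 1)) else 0

lemma Fhat_FhatInvSingle (k : ℕ) : Fhat (FhatInvSingle k) = Pi.single k 1 := by
  have hk := (fibr_pos k).ne'
  have hk1 := (fibr_pos (k + 1)).ne'
  funext n
  cases n with
  | zero =>
    cases k with
    | zero => simp [Fhat, FhatInvSingle, fibr]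
    | succ k => simp [Fhat, FhatInvSingle]
  | succ n =>
    have hn1 := (fibr_pos (n + 1)).ne'
    have hn2 := (fibr_pos (n + 2)).ne'
    rcases lt_trichotomy (n + 1) k with h | rfl | h
    · simp [Fhat, FhatInvSingle, h.ne, not_le.mpr h, not_le.mpr (Nat.lt_of_succ_lt h)]
    · simp only [Fhat, FhatInvSingle, le_refl, if_true, Nat.not_succ_le_self, if_false,
        Pi.single_eq_same, mul_zero, sub_zero]
      field_simp
    · simp only [Fhat, FhatInvSingle, if_pos h.le, if_pos (Nat.le_of_lt_succ h),
        Pi.single_eq_of_ne h.ne']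
      field_simp
      ring

lemma FhatInvSingle_mem_ellF (k : ℕ) : FhatInvSingle k ∈ ellF 1 := by
  change Memℓp (Fhat (FhatInvSingle k)) 1
  rw [Fhat_FhatInvSingle]
  exact (lp.single (E := fun _ : ℕ => ℝ) 1 k 1).2

noncomputable def ellFSingle (k : ℕ) : ellF 1 := ⟨FhatInvSingle k, FhatInvSingle_mem_ellF k⟩

lemma Fhat_ellFSingle (k : ℕ) : Fhat (ellFSingle k : ℕ → ℝ) = Pi.single k 1 :=
  Fhat_FhatInvSingle k

lemma norm_ellFSingle (k : ℕ) : ‖ellFSingle k‖ = 1 := by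
  have h : ellFtoLp 1 (ellFSingle k) = lp.single (E := fun _ : ℕ => ℝ) 1 k 1 :=
    Subtype.ext (Fhat_ellFSingle k)
  change ‖ellFtoLp 1 (ellFSingle k)‖ = 1
  rw [h, lp.norm_single one_pos, norm_one]

lemma summable_abs_Fhat (x : ellF 1) : Summable fun k => |Fhat (x : ℕ → ℝ) k| := by
  have hx : Memℓp (Fhat (x : ℕ → ℝ)) 1 := x.2
  simpa using hx.summable (by simp)

lemma norm_ellF_one_eq_tsum (x : ellF 1) : ‖x‖ = ∑' k, |Fhat (x : ℕ → ℝ) k| := by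
  change ‖ellFtoLp 1 x‖ = _
  rw [lp.norm_eq_tsum_rpow (by simp)]
  simp [ellFtoLp]

lemma tsum_mul_Fhat_ellFSingle (b : ℕ → ℝ) (k : ℕ) :
    ∑' j, b j * Fhat (ellFSingle k : ℕ → ℝ) j = b k := by
  rw [Fhat_ellFSingle, tsum_eq_single k fun j hj => by simp [hj]]
  simp

lemma abs_tsum_mul_le_mul_tsum_abs {ι : Type*} {b y : ι → ℝ} {M : ℝ} (hb : ∀ i, |b i| ≤ M)
    (hy : Summable fun i => |y i|) : |∑' i, b i * y i| ≤ M * ∑' i, |y i| := by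
  have hle : ∀ i, |b i * y i| ≤ M * |y i| := fun i => by
    rw [abs_mul]; exact mul_le_mul_of_nonneg_right (hb i) (abs_nonneg _)
  have hby : Summable fun i => |b i * y i| :=
    (hy.mul_left M).of_nonneg_of_le (fun i => abs_nonneg _) hle
  calc |∑' i, b i * y i| ≤ ∑' i, |b i * y i| := by
        simpa only [Real.norm_eq_abs] using norm_tsum_le_tsum_norm (f := fun i => b i * y i) hby
    _ ≤ ∑' i, M * |y i| := hby.tsum_le_tsum hle (hy.mul_left M)
    _ = M * ∑' i, |y i| := tsum_mul_left

lemma abs_tsum_abar_mul_Fhat_le {a : ℕ → ℝ} (habar : BddAbove (Set.range fun k => |abar a k|))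
    (x : ellF 1) :
    |∑' k, abar a k * Fhat (x : ℕ → ℝ) k| ≤ (⨆ k, |abar a k|) * ‖x‖ := by
  rw [norm_ellF_one_eq_tsum]
  exact abs_tsum_mul_le_mul_tsum_abs (le_ciSup habar) (summable_abs_Fhat x)

theorem stmt8_general (a : ℕ → ℝ)
    (habar : BddAbove (Set.range fun k : ℕ => |abar a k|))
    (hrep : ∀ x : ellF 1, Summable (fun k : ℕ => a k * (x : ℕ → ℝ) k) ∧
      ∑' k : ℕ, a k * (x : ℕ → ℝ) k = ∑' k : ℕ, abar a k * Fhat (x : ℕ → ℝ) k) :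
    sSup {c : ℝ | ∃ x : ellF 1, ‖x‖ ≤ 1 ∧ c = |∑' k : ℕ, a k * (x : ℕ → ℝ) k|} =
      ⨆ k : ℕ, |abar a k| := by
  set M := ⨆ k : ℕ, |abar a k|
  have hM : 0 ≤ M := (abs_nonneg _).trans (le_ciSup habar 0)
  have hub : ∀ c ∈ {c : ℝ | ∃ x : ellF 1, ‖x‖ ≤ 1 ∧ c = |∑' k : ℕ, a k * (x : ℕ → ℝ) k|},
      c ≤ M := by
    rintro c ⟨x, hx, rfl⟩
    rw [(hrep x).2]
    exact (abs_tsum_abar_mul_Fhat_le habar x).trans (mul_le_of_le_one_right hM hx)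
  refine le_antisymm (csSup_le ⟨_, 0, by simp, rfl⟩ hub) (ciSup_le fun k => ?_)
  refine le_csSup ⟨M, hub⟩ ⟨ellFSingle k, (norm_ellFSingle k).le, ?_⟩
  rw [(hrep _).2, tsum_mul_Fhat_ellFSingle]

theorem stmt8 (a : ℕ → ℝ)
    (ha : ∀ k : ℕ, Summable fun j : ℕ => |fibr (k + j + 1) ^ 2 / (fibr k * fibr (k + 1)) * a (k + j)|)
    (habar : BddAbove (Set.range fun k : ℕ => |abar a k|))
    (hrep : ∀ x : ellF 1, Summable (fun k : ℕ => a k * (x : ℕ → ℝ) k) ∧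
      ∑' k : ℕ, a k * (x : ℕ → ℝ) k = ∑' k : ℕ, abar a k * Fhat (x : ℕ → ℝ) k) :
    sSup {c : ℝ | ∃ x : ellF 1, ‖x‖ ≤ 1 ∧ c = |∑' k : ℕ, a k * (x : ℕ → ℝ) k|} =
      ⨆ k : ℕ, |abar a k| :=
  stmt8_general a habar hrep
end

section
/- Let y ∈ ℓ_1 and define x_n = Σ_{k=0}^n (f_{n+1}^2/(f_k f_{k+1})) y_k. Then F̂x = y, so x ∈ ℓ_1(F̂) and ‖x‖_{ℓ_1(F̂)} = ‖y‖_{ℓ_1}; in particular, for each k there exists c^{(k)} ∈ ℓ_1(F̂) of unit norm with F̂c^{(k)} = e^{(k)}, the k-th standard unit sequence, and c^{(k)}_n = f_{n+1}^2/(f_k f_{k+1}) for n ≥ k, c^{(k)}_n = 0 for n < k. -/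
open scoped BigOperators ENNReal
open Filter Topology

/-!
With `S n = ∑_{k ≤ n} y k / (f_k f_{k+1})` the candidate is `x n = f_{n+1}² S n`. The matrix `F̂`
sends `f_{n+1}² S n` to `f_n f_{n+1} (S n - S (n - 1))`, so it undoes the partial summation and
returns `y`. Taking `y = e⁽ᵏ⁾` gives the sequences `c⁽ᵏ⁾`.
-/

lemma Fhat_fibr_sq_mul_succ (S : ℕ → ℝ) (n : ℕ) :
    Fhat (fun m => fibr (m + 1) ^ 2 * S m) (n + 1) =
      fibr (n + 1) * fibr (n + 2) * (S (n + 1) - S n) := by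
  have h₁ := (fibr_pos (n + 1)).ne'
  have h₂ := (fibr_pos (n + 2)).ne'
  simp only [Fhat]
  field_simp

theorem Fhat_eq_of_eq_sum (y x : ℕ → ℝ)
    (hx : ∀ n, x n = ∑ k ∈ Finset.range (n + 1), fibr (n + 1) ^ 2 / (fibr k * fibr (k + 1)) * y k) :
    Fhat x = y := by
  set S : ℕ → ℝ := fun n => ∑ k ∈ Finset.range (n + 1), y k / (fibr k * fibr (k + 1))
  have hxS : x = fun n => fibr (n + 1) ^ 2 * S n := by
    funext n
    rw [hx, Finset.mul_sum]
    exact Finset.sum_congr rfl fun k _ => by ring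
  subst hxS
  funext n
  cases n with
  | zero => simp [Fhat, S, fibr]
  | succ n =>
    have hf := (mul_pos (fibr_pos (n + 1)) (fibr_pos (n + 2))).ne'
    rw [Fhat_fibr_sq_mul_succ]
    simp only [S, Finset.sum_range_succ, add_sub_cancel_left]
    exact mul_div_cancel₀ _ hf

theorem Fhat_eq_single (k : ℕ) :
    Fhat (fun n => if k ≤ n then fibr (n + 1) ^ 2 / (fibr k * fibr (k + 1)) else 0) =
      fun n => if n = k then 1 else 0 :=
  Fhat_eq_of_eq_sum _ _ fun n => by
    simp only [mul_ite, mul_one, mul_zero, Finset.sum_ite_eq', Finset.mem_range, Nat.lt_succ_iff]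

theorem stmt19 :
    (∀ y x : ℕ → ℝ, Summable (fun n : ℕ => |y n|) →
      (∀ n : ℕ, x n = ∑ k ∈ Finset.range (n + 1), fibr (n + 1) ^ 2 / (fibr k * fibr (k + 1)) * y k) →
      Fhat x = y ∧ Summable (fun n : ℕ => |Fhat x n|) ∧ ∑' n : ℕ, |Fhat x n| = ∑' n : ℕ, |y n|) ∧
    (∀ k : ℕ,
      Fhat (fun n => if k ≤ n then fibr (n + 1) ^ 2 / (fibr k * fibr (k + 1)) else 0) =
        (fun n => if n = k then (1 : ℝ) else 0) ∧
      ∑' n : ℕ, |Fhat (fun n => if k ≤ n then fibr (n + 1) ^ 2 / (fibr k * fibr (k + 1)) else 0) n| = 1) := by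
  refine ⟨fun y x hy hx => ?_, fun k => ⟨Fhat_eq_single k, ?_⟩⟩
  · obtain rfl := Fhat_eq_of_eq_sum y x hx
    exact ⟨rfl, hy, rfl⟩
  · simp only [Fhat_eq_single, apply_ite abs, abs_one, abs_zero]
    exact tsum_ite_eq k 1
end
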